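/- Let β > −1 and n_β(t) = max(⌊t−β⌋, 0) (the counting function of the sequence t_k = k+β). There exist constants C > 0, D > 0 and M₀ ≥ 1, depending only on β, such that for all integers M ≥ M₀ and all real u ≥ D: u³ ∫_0^{M+β} n_β(t) / (t²(t² + u² + ut√2)) dt ≥ C u · log(min(M+β, u)). -/

import Mathlib

open MeasureTheory intervalIntegral

theorem lower_bound_integral_beta (β : ℝ) (hβ : -1 < β) :
    ∃ C : ℝ, 0 < C ∧ ∃ D : ℝ, 0 < D ∧ ∃ M₀ : ℕ, 1 ≤ M₀ ∧
      ∀ M : ℕ, M₀ ≤ M → ∀ u : ℝ, D ≤ u →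
        C * u * Real.log (min ((M : ℝ) + β) u) ≤
          u ^ 3 * ∫ x in (0 : ℝ)..((M : ℝ) + β),
            ((max ⌊x - β⌋ 0 : ℤ) : ℝ) /
              (x ^ 2 * (x ^ 2 + u ^ 2 + u * x * Real.sqrt 2)) := by
  set a : ℝ := max (2 * β + 2) 1 with ha_def
  have ha1 : 1 ≤ a := le_max_right _ _
  have ha0 : 0 < a := lt_of_lt_of_le one_pos ha1
  have ha2 : 1 ≤ a ^ 2 := one_le_pow₀ ha1
  have haa : a ≤ a ^ 2 := by nlinarith
  refine ⟨1/16, by norm_num, a ^ 2, by positivity, ⌈a ^ 2 - β⌉₊ + 1,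
    Nat.le_add_left 1 _, ?_⟩
  intro M hM u hu
  have hu2 : a ^ 2 ≤ u := hu
  have hu1 : 1 ≤ u := ha2.trans hu
  have hu0 : 0 < u := lt_of_lt_of_le one_pos hu1
  set T : ℝ := (M : ℝ) + β with hT_def
  have hMT : a ^ 2 ≤ T := by
    have h1 : a ^ 2 - β ≤ (⌈a ^ 2 - β⌉₊ : ℝ) := Nat.le_ceil _
    have h2 : ((⌈a ^ 2 - β⌉₊ + 1 : ℕ) : ℝ) ≤ (M : ℝ) := by exact_mod_cast hM
    push_cast at h2
    linarith
  have hT0 : 0 < T := lt_of_lt_of_le (by linarith) hMT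
  set m : ℝ := min T u with hm_def
  have hm2 : a ^ 2 ≤ m := le_min hMT hu2
  have hm1 : 1 ≤ m := ha2.trans hm2
  have hm0 : 0 < m := lt_of_lt_of_le one_pos hm1
  have ham : a ≤ m := haa.trans hm2
  have hmu : m ≤ u := min_le_right _ _
  have hmT : m ≤ T := min_le_left _ _
  set f : ℝ → ℝ := fun x =>
    ((max ⌊x - β⌋ 0 : ℤ) : ℝ) / (x ^ 2 * (x ^ 2 + u ^ 2 + u * x * Real.sqrt 2)) with hf_def
  have hfmeas : Measurable f := by
    apply Measurable.div
    · exact measurable_from_top.comp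
        ((Int.measurable_floor.comp (measurable_id.sub measurable_const)).max measurable_const)
    · fun_prop
  have hfnonneg : ∀ x ∈ Set.Ioc (0:ℝ) T, 0 ≤ f x := by
    intro x hx
    apply div_nonneg
    · exact_mod_cast Int.cast_nonneg_iff.mpr (le_max_right _ _)
    · have h2 : (0:ℝ) ≤ Real.sqrt 2 := Real.sqrt_nonneg 2
      have := hx.1
      positivity
  have hfbdd : ∀ x ∈ Set.Ioc (0:ℝ) T, ‖f x‖ ≤ (M : ℝ) / ((β+1)^2 * u^2) := by
    intro x hx
    rw [Real.norm_eq_abs, abs_of_nonneg (hfnonneg x hx)]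
    by_cases hc : x < β + 1
    · have hfl : ⌊x - β⌋ ≤ 0 := by
        have : ⌊x - β⌋ < 1 := by
          rw [Int.floor_lt]; push_cast; linarith
        omega
      have hz : max ⌊x - β⌋ 0 = 0 := max_eq_right hfl
      have hfx : f x = 0 := by simp only [hf_def, hz, Int.cast_zero, zero_div]
      rw [hfx]
      positivity
    · push_neg at hc
      have hx0 : 0 < x := hx.1
      have hb1 : 0 < β + 1 := by linarith
      have hnum : ((max ⌊x - β⌋ 0 : ℤ) : ℝ) ≤ (M : ℝ) := by
        have h1 : (⌊x - β⌋ : ℝ) ≤ x - β := Int.floor_le _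
        have h2 : x ≤ T := hx.2
        simp only [hT_def] at h2
        push_cast
        exact max_le (by linarith) (Nat.cast_nonneg _)
      have hden : (β+1)^2 * u^2 ≤ x ^ 2 * (x ^ 2 + u ^ 2 + u * x * Real.sqrt 2) := by
        have h2 : (0:ℝ) ≤ Real.sqrt 2 := Real.sqrt_nonneg 2
        have hx2 : (β+1)^2 ≤ x^2 := by nlinarith [mul_le_mul hc hc hb1.le hx0.le]
        have hq : u^2 ≤ x ^ 2 + u ^ 2 + u * x * Real.sqrt 2 := by
          have h5 : (0:ℝ) ≤ u * x * Real.sqrt 2 := by positivity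
          nlinarith [sq_nonneg x]
        have := mul_le_mul hx2 hq (by positivity) (by positivity)
        linarith
      have hden0 : 0 < (β+1)^2 * u^2 := by positivity
      exact div_le_div₀ (Nat.cast_nonneg _) hnum hden0 hden
  have hfint : IntervalIntegrable f volume 0 T := by
    rw [intervalIntegrable_iff, Set.uIoc_of_le hT0.le]
    apply Measure.integrableOn_of_bounded (M := (M : ℝ) / ((β+1)^2 * u^2)) measure_Ioc_lt_top.ne
      hfmeas.aestronglyMeasurable
    exact (ae_restrict_iff' measurableSet_Ioc).mpr (Filter.Eventually.of_forall hfbdd)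
  have hgle : ∀ x ∈ Set.Icc a m, 1/(8*u^2) * (1/x) ≤ f x := by
    intro x hx
    have hxa : a ≤ x := hx.1
    have hx1 : 1 ≤ x := ha1.trans hxa
    have hx0 : 0 < x := lt_of_lt_of_le one_pos hx1
    have hxb : 2 * β + 2 ≤ x := le_trans (le_max_left _ _) hxa
    have hxu : x ≤ u := hx.2.trans hmu
    have hs0 : (0:ℝ) ≤ Real.sqrt 2 := Real.sqrt_nonneg 2
    have hs2 : Real.sqrt 2 ≤ 2 := by
      nlinarith [Real.sq_sqrt (by norm_num : (0:ℝ) ≤ 2)]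
    have hN : x / 2 ≤ ((max ⌊x - β⌋ 0 : ℤ) : ℝ) := by
      have h1 : x - β - 1 < (⌊x - β⌋ : ℝ) := Int.sub_one_lt_floor _
      have h2 : ((⌊x - β⌋ : ℤ) : ℝ) ≤ ((max ⌊x - β⌋ 0 : ℤ) : ℝ) := by
        exact_mod_cast Int.cast_le.mpr (le_max_left _ _)
      linarith
    have hQ : x ^ 2 + u ^ 2 + u * x * Real.sqrt 2 ≤ 4 * u ^ 2 := by
      have h5 : u * x * Real.sqrt 2 ≤ u * x * 2 :=
        mul_le_mul_of_nonneg_left hs2 (by positivity)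
      have h6 : u * x ≤ u * u := mul_le_mul_of_nonneg_left hxu hu0.le
      have h7 : x ^ 2 ≤ u ^ 2 := pow_le_pow_left₀ hx0.le hxu 2
      linarith
    have hQ0 : 0 < x ^ 2 + u ^ 2 + u * x * Real.sqrt 2 := by positivity
    simp only [hf_def]
    rw [le_div_iff₀ (by positivity)]
    have h3 : x ^ 2 * (x ^ 2 + u ^ 2 + u * x * Real.sqrt 2) ≤ 4 * x^2 * u^2 := by
      have := mul_le_mul_of_nonneg_left hQ (sq_nonneg x)
      linarith
    calc 1/(8*u^2) * (1/x) * (x ^ 2 * (x ^ 2 + u ^ 2 + u * x * Real.sqrt 2))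
        ≤ 1/(8*u^2) * (1/x) * (4 * x^2 * u^2) := by
          apply mul_le_mul_of_nonneg_left h3; positivity
      _ = x / 2 := by field_simp; ring
      _ ≤ ((max ⌊x - β⌋ 0 : ℤ) : ℝ) := hN
  have hgint : IntervalIntegrable (fun x => 1/(8*u^2) * (1/x)) volume a m := by
    apply ContinuousOn.intervalIntegrable
    have hne : ∀ x ∈ Set.uIcc a m, x ≠ 0 := by
      intro x hx
      rw [Set.uIcc_of_le ham] at hx
      exact ne_of_gt (lt_of_lt_of_le ha0 hx.1)
    exact continuousOn_const.mul (continuousOn_const.div continuous_id.continuousOn hne)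
  have hfint' : IntervalIntegrable f volume a m :=
    hfint.mono_set (by
      rw [Set.uIcc_of_le ham, Set.uIcc_of_le hT0.le]
      exact Set.Icc_subset_Icc ha0.le hmT)
  have hmono : (∫ x in a..m, 1/(8*u^2) * (1/x)) ≤ ∫ x in a..m, f x :=
    intervalIntegral.integral_mono_on ham hgint hfint' hgle
  have hinterval : (∫ x in a..m, f x) ≤ ∫ x in (0:ℝ)..T, f x := by
    apply intervalIntegral.integral_mono_interval ha0.le ham hmT _ hfint
    exact (ae_restrict_iff' measurableSet_Ioc).mpr (Filter.Eventually.of_forall hfnonneg)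
  have hgval : (∫ x in a..m, 1/(8*u^2) * (1/x)) = 1/(8*u^2) * Real.log (m/a) := by
    rw [intervalIntegral.integral_const_mul, integral_one_div]
    rw [Set.uIcc_of_le ham]
    intro h
    exact absurd h.1 (by linarith)
  have hlog2 : 2 * Real.log a ≤ Real.log m := by
    have h1 : Real.log (a^2) ≤ Real.log m := Real.log_le_log (by positivity) hm2
    rwa [Real.log_pow, Nat.cast_ofNat] at h1
  have hloga : 0 ≤ Real.log a := Real.log_nonneg ha1
  have hlogm : 0 ≤ Real.log m := Real.log_nonneg hm1
  have hlogdiv : Real.log (m/a) = Real.log m - Real.log a :=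
    Real.log_div (ne_of_gt hm0) (ne_of_gt ha0)
  have hfin : 1/16 * u * Real.log m ≤ u ^ 3 * (1/(8*u^2) * Real.log (m/a)) := by
    rw [hlogdiv]
    have hkey : u ^ 3 * (1/(8*u^2) * (Real.log m - Real.log a))
        = u / 8 * (Real.log m - Real.log a) := by
      field_simp
    rw [hkey]
    have h9 : 0 ≤ u * (Real.log m - 2 * Real.log a) :=
      mul_nonneg hu0.le (by linarith)
    linarith
  calc 1/16 * u * Real.log m ≤ u ^ 3 * (1/(8*u^2) * Real.log (m/a)) := hfin
    _ = u ^ 3 * ∫ x in a..m, 1/(8*u^2) * (1/x) := by rw [hgval]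
    _ ≤ u ^ 3 * ∫ x in a..m, f x := by
        apply mul_le_mul_of_nonneg_left hmono; positivity
    _ ≤ u ^ 3 * ∫ x in (0:ℝ)..T, f x := by
        apply mul_le_mul_of_nonneg_left hinterval; positivity
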